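/- arXiv:1703.01904 — 3 statements merged into one kernel-verified Lean document; each statement's English description precedes it below -/
import Mathlib

section
/- For every integer j ≥ 0, the identity 1 + Σ_{m=0}^{j} B_{2m+2} * (4^{m+1} − 16^{m+1}) * (2j+1)! / ((2j−2m)! * (2m+2)!) = 0 holds, where B_n denotes the n-th Bernoulli number. -/
/-!
With `B(X) = X / (e^X - 1)`, the series `(B(2X) - B(4X)) e^X = 2X e^X / (e^{2X} + 1) = X sech X`
is odd, so its coefficient of `X^(2j+2)` vanishes. Expanding that coefficient, the odd Bernoulli
numbers drop out except `B₁ = -1/2`, which contributes the `1`; the even ones give the sum.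
-/

open PowerSeries Finset
open scoped Nat

theorem Finset.sum_range_two_mul {M : Type*} [AddCommMonoid M] (f : ℕ → M) (n : ℕ) :
    ∑ k ∈ range (2 * n), f k = ∑ i ∈ range n, (f (2 * i) + f (2 * i + 1)) := by
  induction n with
  | zero => simp
  | succ n ih =>
    rw [mul_add, mul_one, sum_range_succ, sum_range_succ, sum_range_succ, ih, add_assoc]

theorem PowerSeries.evalNegHom_evalNegHom {R : Type*} [CommRing R] (f : R⟦X⟧) :
    evalNegHom (evalNegHom f) = f := by
  simp [evalNegHom, rescale_rescale]

theorem PowerSeries.coeff_eq_zero_of_evalNegHom_eq_neg {R : Type*} [CommRing R]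
    [IsAddTorsionFree R] {f : R⟦X⟧} (hf : evalNegHom f = -f) {n : ℕ} (hn : Even n) :
    coeff n f = 0 := by
  have h := congrArg (coeff n) hf
  rwa [evalNegHom, coeff_rescale, hn.neg_one_pow, one_mul, map_neg, self_eq_neg] at h

section

variable (A : Type*) [CommRing A] [Algebra ℚ A]

/-- This is `X sech X = 2X / (e^X + e^{-X})`. -/
noncomputable def xSech : A⟦X⟧ :=
  (rescale 2 (bernoulliPowerSeries A) - rescale 4 (bernoulliPowerSeries A)) * exp A

variable {A}

theorem exp_sq_eq_rescale_two_exp : exp A ^ 2 = rescale 2 (exp A) := by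
  exact_mod_cast exp_pow_eq_rescale_exp 2

theorem rescale_two_bernoulliPowerSeries_mul_exp_sq_sub_one :
    rescale 2 (bernoulliPowerSeries A) * (exp A ^ 2 - 1) = 2 * X := by
  simpa [exp_sq_eq_rescale_two_exp, rescale_X, map_ofNat] using
    congrArg (rescale (2 : A)) (bernoulliPowerSeries_mul_exp_sub_one A)

theorem exp_sub_one_ne_zero [Nontrivial A] : exp A - 1 ≠ 0 := fun h => by
  simpa [coeff_exp] using congrArg (coeff 1) h

theorem exp_add_evalNegHom_exp_ne_zero [Nontrivial A] :
    exp A + evalNegHom (exp A) ≠ 0 := fun h => by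
  have h₀ := congrArg (coeff 0) h
  rw [map_add, evalNegHom, coeff_rescale, coeff_exp, map_zero] at h₀
  norm_num at h₀
  rw [← map_ofNat (algebraMap ℚ A), map_eq_zero_iff _ (algebraMap ℚ A).injective] at h₀
  norm_num at h₀

variable [IsDomain A]

theorem rescale_two_bernoulliPowerSeries_mul_exp_add_one :
    rescale 2 (bernoulliPowerSeries A) * (exp A + 1) = 2 * bernoulliPowerSeries A := by
  refine mul_right_cancel₀ exp_sub_one_ne_zero ?_
  linear_combination rescale_two_bernoulliPowerSeries_mul_exp_sq_sub_one (A := A) -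
    2 * bernoulliPowerSeries_mul_exp_sub_one A

theorem xSech_mul_exp_add_evalNegHom_exp : xSech A * (exp A + evalNegHom (exp A)) = 2 * X := by
  rw [xSech]
  have h4 := congrArg (rescale (2 : A)) (rescale_two_bernoulliPowerSeries_mul_exp_add_one (A := A))
  rw [map_mul, map_add, map_one, map_mul, map_ofNat, rescale_rescale,
    ← exp_sq_eq_rescale_two_exp] at h4
  norm_num at h4
  linear_combination rescale_two_bernoulliPowerSeries_mul_exp_sq_sub_one (A := A) - h4 +
    (rescale 2 (bernoulliPowerSeries A) - rescale 4 (bernoulliPowerSeries A)) *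
      exp_mul_exp_neg_eq_one (A := A)

theorem evalNegHom_xSech : evalNegHom (xSech A) = -xSech A := by
  refine mul_right_cancel₀ exp_add_evalNegHom_exp_ne_zero ?_
  have h := congrArg evalNegHom (xSech_mul_exp_add_evalNegHom_exp (A := A))
  rw [map_mul, map_add, evalNegHom_evalNegHom, map_mul, map_ofNat, evalNegHom_X] at h
  linear_combination h + xSech_mul_exp_add_evalNegHom_exp (A := A)

end

theorem coeff_xSech (n : ℕ) :
    coeff n (xSech ℚ) =
      ∑ k ∈ range (n + 1), ((2 : ℚ) ^ k - 4 ^ k) * bernoulli k / (k ! * (n - k)!) := by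
  rw [xSech, coeff_mul, Nat.sum_antidiagonal_eq_sum_range_succ_mk]
  refine sum_congr rfl fun k _ => ?_
  simp only [map_sub, coeff_rescale, bernoulliPowerSeries, coeff_mk, coeff_exp,
    Algebra.algebraMap_self_apply]
  ring

theorem sum_two_pow_sub_four_pow_mul_bernoulli_even (j : ℕ) :
    ∑ m ∈ range (j + 1), ((2 : ℚ) ^ (2 * m + 2) - 4 ^ (2 * m + 2)) * bernoulli (2 * m + 2) /
      ((2 * m + 2)! * (2 * j - 2 * m)!) = -1 / (2 * j + 1)! := by
  have h := coeff_xSech (2 * j + 2)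
  rw [coeff_eq_zero_of_evalNegHom_eq_neg evalNegHom_xSech ⟨j + 1, by ring⟩, sum_range_succ',
    show 2 * j + 2 = 2 * (j + 1) by ring, sum_range_two_mul, sum_add_distrib,
    sum_eq_single_of_mem 0 (by simp)] at h
  · have hsub : ∀ m ∈ range (j + 1), 2 * (j + 1) - (2 * m + 1 + 1) = 2 * j - 2 * m :=
      fun m hm => by simp at hm; omega
    rw [sum_congr rfl fun m hm => by rw [hsub m hm]] at h
    norm_num [bernoulli_one, show 2 * (j + 1) - 1 = 2 * j + 1 by omega] at h
    linear_combination -h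
  · intro i _ hi
    rw [bernoulli_eq_zero_of_odd ⟨i, by ring⟩ (by omega)]
    simp

theorem bernoulli_sum_identity (j : ℕ) :
    1 + ∑ m ∈ Finset.range (j + 1),
      bernoulli (2 * m + 2) * ((4 : ℚ) ^ (m + 1) - 16 ^ (m + 1)) * (2 * j + 1)! /
        ((2 * j - 2 * m)! * (2 * m + 2)!) = 0 := by
  have hterm (m : ℕ) :
      bernoulli (2 * m + 2) * ((4 : ℚ) ^ (m + 1) - 16 ^ (m + 1)) * (2 * j + 1)! /
        ((2 * j - 2 * m)! * (2 * m + 2)!) = (2 * j + 1)! *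
      (((2 : ℚ) ^ (2 * m + 2) - 4 ^ (2 * m + 2)) * bernoulli (2 * m + 2) /
        ((2 * m + 2)! * (2 * j - 2 * m)!)) := by
    rw [show 2 * m + 2 = 2 * (m + 1) by ring, pow_mul, pow_mul]
    ring
  rw [sum_congr rfl fun m _ => hterm m, ← mul_sum, sum_two_pow_sub_four_pow_mul_bernoulli_even,
    mul_div_cancel₀ _ (by positivity : ((2 * j + 1)! : ℚ) ≠ 0), add_neg_cancel]
end

section
/- For every j ≥ 1, the identity 1/(4j) + Σ_{m=1}^{i} (E_{2m}/(4m)) C(2j−1, 2j−2m) = 0 holds whenever i ≥ j, where E_{2m} are the Euler numbers. Equivalently, 1/(4j) + Σ_{m=1}^{j} (E_{2m}/(4m)) C(2j−1, 2j−2m) = 0. -/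
/-!
Comparing the coefficients of `z^(2j)` in `cosh z · sech z = 1` gives the recurrence
`∑_{m=0}^{j} C(2j, 2m) E_{2m} = 0` for `j ≥ 1`. By the absorption identity
`(2j) C(2j-1, 2m-1) = (2m) C(2j, 2m)`, the `m`-th summand of the theorem is
`C(2j, 2m) E_{2m} / (4j)`, and `1/(4j)` is the `m = 0` term of the recurrence
(as `E_0 = 1`), scaled in the same way.
-/

open scoped Nat

/-- The formal power series sech(z) = 1/cosh(z) over ℚ. -/
noncomputable def sechSeries : PowerSeries ℚ :=
  (PowerSeries.mk fun n => if Even n then 1 / n ! else 0)⁻¹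

/-- The n-th Euler number, defined by sech(z) = Σ E_n z^n / n!. -/
noncomputable def eulerNumber (n : ℕ) : ℚ :=
  n ! * PowerSeries.coeff n sechSeries

open Finset PowerSeries

theorem Finset.sum_range_two_mul_add_one_ite_even {M : Type*} [AddCommMonoid M] (f : ℕ → M)
    (n : ℕ) :
    ∑ k ∈ range (2 * n + 1), (if Even k then f k else 0) = ∑ m ∈ range (n + 1), f (2 * m) := by
  induction n with
  | zero => simp
  | succ n ih =>
    have hodd : ¬Even (2 * n + 1) := Nat.not_even_iff_odd.mpr (odd_two_mul_add_one n)
    rw [show 2 * (n + 1) + 1 = 2 * n + 1 + 1 + 1 by ring, sum_range_succ, sum_range_succ, ih,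
      if_neg hodd, add_zero, sum_range_succ _ (n + 1), if_pos (by grind)]
    ring_nf

theorem Nat.choose_sub_one_sub_mul {n k : ℕ} (hk : 0 < k) (hkn : k ≤ n) :
    (n - 1).choose (n - k) * n = n.choose k * k := by
  obtain ⟨n, rfl⟩ : ∃ n', n = n' + 1 := ⟨n - 1, by omega⟩
  obtain ⟨k, rfl⟩ : ∃ k', k = k' + 1 := ⟨k - 1, by omega⟩
  rw [Nat.add_sub_cancel, Nat.add_sub_add_right, Nat.choose_symm (by omega), mul_comm,
    Nat.add_one_mul_choose_eq]

noncomputable def coshSeries : PowerSeries ℚ :=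
  PowerSeries.mk fun n => if Even n then 1 / n ! else 0

theorem coshSeries_mul_sechSeries : coshSeries * sechSeries = 1 :=
  PowerSeries.mul_inv_cancel _ (by simp [coshSeries])

theorem coeff_sechSeries (n : ℕ) : coeff n sechSeries = eulerNumber n / n ! := by
  rw [eulerNumber]
  field_simp

theorem eulerNumber_zero : eulerNumber 0 = 1 := by
  simp [eulerNumber, sechSeries, coeff_zero_eq_constantCoeff, constantCoeff_inv]

theorem sum_ite_even_choose_mul_eulerNumber_sub_eq_zero {n : ℕ} (hn : n ≠ 0) :
    ∑ k ∈ range (n + 1), (if Even k then (n.choose k : ℚ) * eulerNumber (n - k) else 0) = 0 := by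
  have h := congrArg (coeff n) coshSeries_mul_sechSeries
  rw [coeff_mul, Nat.sum_antidiagonal_eq_sum_range_succ_mk, coeff_one, if_neg hn] at h
  calc _ = (n ! : ℚ) * ∑ k ∈ range (n + 1), coeff k coshSeries * coeff (n - k) sechSeries := ?_
    _ = 0 := by rw [h, mul_zero]
  rw [mul_sum]
  refine sum_congr rfl fun k hk => ?_
  have hkn : k ≤ n := Nat.lt_succ_iff.mp (mem_range.mp hk)
  split_ifs with hk <;> simp [coshSeries, hk, coeff_sechSeries, Nat.cast_choose ℚ hkn]
  field_simp

theorem sum_choose_two_mul_mul_eulerNumber_two_mul_eq_zero {j : ℕ} (hj : j ≠ 0) :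
    ∑ m ∈ range (j + 1), ((2 * j).choose (2 * m) : ℚ) * eulerNumber (2 * m) = 0 := by
  have h := sum_ite_even_choose_mul_eulerNumber_sub_eq_zero (n := 2 * j) (by omega)
  rw [sum_range_two_mul_add_one_ite_even, ← sum_range_reflect] at h
  rw [← h]
  refine sum_congr rfl fun m hm => ?_
  have hmj : m ≤ j := Nat.lt_succ_iff.mp (mem_range.mp hm)
  rw [show 2 * j - 2 * (j + 1 - 1 - m) = 2 * m by omega,
    ← Nat.choose_symm (by omega : 2 * m ≤ 2 * j),
    show 2 * j - 2 * m = 2 * (j + 1 - 1 - m) by omega]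

theorem euler_binom_identity (j : ℕ) (hj : 1 ≤ j) :
    1 / (4 * (j : ℚ)) +
      ∑ m ∈ Finset.Icc 1 j,
        eulerNumber (2 * m) / (4 * m) * ((2 * j - 1).choose (2 * j - 2 * m) : ℚ) = 0 := by
  have hj0 : (j : ℚ) ≠ 0 := Nat.cast_ne_zero.mpr (by omega)
  have hterm : ∀ m ∈ Icc 1 j,
      eulerNumber (2 * m) / (4 * m) * ((2 * j - 1).choose (2 * j - 2 * m) : ℚ) =
        1 / (4 * j) * (((2 * j).choose (2 * m) : ℚ) * eulerNumber (2 * m)) := by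
    intro m hm
    obtain ⟨hm1, hmj⟩ := mem_Icc.mp hm
    have h : ((2 * j - 1).choose (2 * j - 2 * m) : ℚ) * (2 * j) =
        (2 * j).choose (2 * m) * (2 * m) := by
      exact_mod_cast Nat.choose_sub_one_sub_mul (n := 2 * j) (k := 2 * m) (by omega) (by omega)
    have hm0 : (m : ℚ) ≠ 0 := Nat.cast_ne_zero.mpr (by omega)
    field_simp
    linear_combination eulerNumber (2 * m) / 2 * h
  have h := sum_choose_two_mul_mul_eulerNumber_two_mul_eq_zero (by omega : j ≠ 0)
  rw [Nat.range_succ_eq_Icc_zero, ← insert_Icc_add_one_left_eq_Icc (Nat.zero_le j),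
    sum_insert (by simp)] at h
  simp only [mul_zero, Nat.choose_zero_right, Nat.cast_one, eulerNumber_zero, one_mul] at h
  rw [sum_congr rfl hterm, ← mul_sum]
  linear_combination 1 / (4 * (j : ℚ)) * h
end

section
/- For every j ≥ 1, the identity 2^{−2i−1}/(2j+1) − Σ_{m=1}^{j} (B_{2m+2}(4^{m−i} − 4^{2m−i+1})/(2m(m+1)(2m+1))) C(2j−1, 2j−2m) = 0 holds for every i (the 2^{−i} factor cancels); equivalently, 1/(2(2j+1)) = Σ_{m=1}^{j} (B_{2m+2}(4^{m} − 4^{2m+1})/(2m(m+1)(2m+1))) C(2j−1, 2j−2m). -/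
/-!
Since `B(2x) - B(4x) = 2x / (e^{2x} + 1)` for `B(x) = x / (e^x - 1)`, the series
`(B(2x) - B(4x)) e^x = x / cosh x` is odd, so its coefficient of `x^n` vanishes for even `n`:
`∑ₚ C(n, p) Bₚ (2^p - 4^p) = 0`. For `n = 2j + 2` the terms `p ≤ 2` are explicit and the odd
`p ≥ 3` vanish, leaving `∑_{m=1}^{j} C(2j+2, 2m+2) B_{2m+2} (4^{m+1} - 4^{2m+2}) = (2j+2)(2j)`.
As `C(2j+2, 2m+2) (2m+2)(2m+1)(2m) = (2j+2)(2j+1)(2j) C(2j-1, 2m-1)`, this is the claimed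
identity; the `i`-dependence is a common factor `4^{-i}`.
-/

open PowerSeries Finset
open scoped Nat

theorem factorial_mul_coeff_mk_mul_exp (a : ℕ → ℚ) (n : ℕ) :
    n ! * coeff n ((mk fun p => a p / p !) * exp ℚ) =
      ∑ p ∈ range (n + 1), n.choose p * a p := by
  rw [coeff_mul, Nat.sum_antidiagonal_eq_sum_range_succ_mk, mul_sum]
  refine sum_congr rfl fun p hp => ?_
  have hpn : p ≤ n := Nat.lt_succ_iff.mp (mem_range.mp hp)
  rw [coeff_mk, coeff_exp, Nat.cast_choose ℚ hpn, Algebra.algebraMap_self, RingHom.id_apply]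
  field_simp

theorem coeff_eq_zero_of_rescale_neg_one_eq_neg {R : Type*} [CommRing R] [IsAddTorsionFree R]
    {f : R⟦X⟧} (hf : rescale (-1) f = -f) {n : ℕ} (hn : Even n) : coeff n f = 0 := by
  have h := congrArg (coeff n) hf
  rwa [coeff_rescale, hn.neg_one_pow, one_mul, map_neg, self_eq_neg] at h

theorem rescale_bernoulliPowerSeries_mul_rescale_exp_sub_one {A : Type*} [CommRing A]
    [Algebra ℚ A] (c : A) :
    rescale c (bernoulliPowerSeries A) * (rescale c (exp A) - 1) = C c * X := by
  simpa only [map_mul, map_sub, map_one, rescale_X] using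
    congrArg (rescale c) (bernoulliPowerSeries_mul_exp_sub_one A)

theorem rescale_exp_sub_one_ne_zero {c : ℚ} (hc : c ≠ 0) : rescale c (exp ℚ) - 1 ≠ 0 := by
  intro h
  simpa [coeff_exp, hc] using congrArg (coeff 1) h

theorem rescale_two_exp_add_one_ne_zero : rescale (2 : ℚ) (exp ℚ) + 1 ≠ 0 := by
  intro h
  have h0 := congrArg (coeff 0) h
  rw [map_add, coeff_rescale, coeff_exp] at h0
  norm_num at h0

theorem rescale_four_exp :
    rescale (4 : ℚ) (exp ℚ) = rescale 2 (exp ℚ) * rescale 2 (exp ℚ) := by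
  rw [exp_mul_exp_eq_exp_add]; norm_num

theorem rescale_two_sub_rescale_four_bernoulliPowerSeries_mul :
    (rescale (2 : ℚ) (bernoulliPowerSeries ℚ) - rescale 4 (bernoulliPowerSeries ℚ)) *
      (rescale 2 (exp ℚ) + 1) = 2 * X := by
  have h2 := rescale_bernoulliPowerSeries_mul_rescale_exp_sub_one (2 : ℚ)
  have h4 := rescale_bernoulliPowerSeries_mul_rescale_exp_sub_one (4 : ℚ)
  rw [map_ofNat] at h2 h4
  -- cancel `e^{2x} - 1`, using `e^{4x} - 1 = (e^{2x} - 1)(e^{2x} + 1)`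
  apply mul_right_cancel₀ (rescale_exp_sub_one_ne_zero (two_ne_zero : (2 : ℚ) ≠ 0))
  linear_combination (rescale (2 : ℚ) (exp ℚ) + 1) * h2 - h4 +
    rescale (4 : ℚ) (bernoulliPowerSeries ℚ) * rescale_four_exp

/-- `x / cosh x = (2x / (e^{2x} - 1) - 4x / (e^{4x} - 1)) e^x`. -/
noncomputable def xSechSeries : ℚ⟦X⟧ :=
  (rescale 2 (bernoulliPowerSeries ℚ) - rescale 4 (bernoulliPowerSeries ℚ)) * exp ℚ

theorem rescale_neg_one_xSechSeries : rescale (-1) xSechSeries = -xSechSeries := by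
  set H := rescale (2 : ℚ) (bernoulliPowerSeries ℚ) - rescale 4 (bernoulliPowerSeries ℚ)
  have hH := rescale_two_sub_rescale_four_bernoulliPowerSeries_mul
  have hH' : rescale (-1) H * (rescale (-2) (exp ℚ) + 1) = -2 * X := by
    have := congrArg (rescale (-1 : ℚ)) hH
    rwa [map_mul, map_add, map_one, rescale_rescale, map_mul, map_ofNat, rescale_neg_one_X,
      show (2 : ℚ) * -1 = -2 by norm_num, mul_neg, ← neg_mul] at this
  have e1 : rescale (-1 : ℚ) (exp ℚ) * rescale 2 (exp ℚ) = exp ℚ := by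
    rw [exp_mul_exp_eq_exp_add]; norm_num
  have e2 : rescale (-2 : ℚ) (exp ℚ) * rescale 2 (exp ℚ) = 1 := by
    rw [exp_mul_exp_eq_exp_add]; simp
  rw [xSechSeries, map_mul]
  -- after multiplying by `e^{2x} + 1`, both sides are `-2x e^x`
  apply mul_right_cancel₀ rescale_two_exp_add_one_ne_zero
  linear_combination exp ℚ * hH + rescale (-1 : ℚ) (exp ℚ) * rescale 2 (exp ℚ) * hH'
    - rescale (-1 : ℚ) (exp ℚ) * rescale (-1) H * e2 - 2 * X * e1

theorem factorial_mul_coeff_xSechSeries (n : ℕ) :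
    n ! * coeff n xSechSeries =
      ∑ p ∈ range (n + 1), n.choose p * (bernoulli p * (2 ^ p - 4 ^ p)) := by
  have hmk : rescale (2 : ℚ) (bernoulliPowerSeries ℚ) - rescale 4 (bernoulliPowerSeries ℚ) =
      mk fun p => bernoulli p * (2 ^ p - 4 ^ p) / p ! := by
    ext p
    simp only [map_sub, coeff_rescale, bernoulliPowerSeries, coeff_mk, Algebra.algebraMap_self,
      RingHom.id_apply]
    ring
  rw [xSechSeries, hmk, factorial_mul_coeff_mk_mul_exp]

theorem sum_choose_mul_bernoulli_mul_two_pow_sub_four_pow_of_even {n : ℕ} (hn : Even n) :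
    ∑ p ∈ range (n + 1), (n.choose p : ℚ) * (bernoulli p * (2 ^ p - 4 ^ p)) = 0 := by
  rw [← factorial_mul_coeff_xSechSeries,
    coeff_eq_zero_of_rescale_neg_one_eq_neg rescale_neg_one_xSechSeries hn, mul_zero]

theorem Finset.sum_range_two_mul_add_three {M : Type*} [AddCommMonoid M] (f : ℕ → M) (j : ℕ) :
    ∑ k ∈ range (2 * j + 3), f k =
      f 0 + f 1 + f 2 + ∑ m ∈ Icc 1 j, (f (2 * m + 1) + f (2 * m + 2)) := by
  induction j with
  | zero => simp [sum_range_succ]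
  | succ j ih =>
    rw [show 2 * (j + 1) + 3 = 2 * j + 3 + 1 + 1 by ring, sum_range_succ, sum_range_succ, ih,
      sum_Icc_succ_top (by omega : 1 ≤ j + 1), show 2 * (j + 1) + 1 = 2 * j + 3 by ring,
      show 2 * (j + 1) + 2 = 2 * j + 3 + 1 by ring]
    simp only [add_assoc]

theorem sum_Icc_choose_mul_bernoulli_mul_two_pow_sub_four_pow (j : ℕ) :
    ∑ m ∈ Icc 1 j, ((2 * j + 2).choose (2 * m + 2) : ℚ) *
      (bernoulli (2 * m + 2) * (2 ^ (2 * m + 2) - 4 ^ (2 * m + 2))) = (2 * j + 2) * (2 * j) := by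
  set f : ℕ → ℚ := fun p => (2 * j + 2).choose p * (bernoulli p * (2 ^ p - 4 ^ p))
  have hsum := sum_choose_mul_bernoulli_mul_two_pow_sub_four_pow_of_even (n := 2 * j + 2)
    ⟨j + 1, by ring⟩
  have hodd : ∀ m ∈ Icc 1 j, f (2 * m + 1) + f (2 * m + 2) = f (2 * m + 2) := by
    intro m hm
    have hB : bernoulli (2 * m + 1) = 0 :=
      bernoulli_eq_zero_of_odd (odd_two_mul_add_one m) (by grind)
    simp [f, hB]
  rw [Finset.sum_range_two_mul_add_three f j, sum_congr rfl hodd] at hsum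
  have hf1 : f 1 = 2 * j + 2 := by
    simp only [f, Nat.choose_one_right, bernoulli_one]; push_cast; ring
  have hf2 : f 2 = -((2 * j + 2) * (2 * j + 1)) := by
    simp only [f, Nat.cast_choose_two, bernoulli_two]; push_cast; ring
  have hf0 : f 0 = 0 := by simp [f]
  linear_combination hsum - hf0 - hf1 - hf2

theorem Nat.choose_add_three_mul (a b : ℕ) :
    (a + 3).choose (b + 3) * ((b + 3) * (b + 2) * (b + 1)) =
      (a + 3) * (a + 2) * (a + 1) * a.choose b := by
  have h1 := Nat.add_one_mul_choose_eq a b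
  have h2 := Nat.add_one_mul_choose_eq (a + 1) (b + 1)
  have h3 := Nat.add_one_mul_choose_eq (a + 2) (b + 2)
  grind

theorem bernoulli_term_eq_choose_div (j m : ℕ) (hm : 1 ≤ m) (hmj : m ≤ j) :
    bernoulli (2 * m + 2) * ((4 : ℚ) ^ m - 4 ^ (2 * m + 1)) /
        (2 * m * ((m : ℚ) + 1) * (2 * m + 1)) * ((2 * j - 1).choose (2 * j - 2 * m) : ℚ) =
      (2 * j + 2).choose (2 * m + 2) *
          (bernoulli (2 * m + 2) * (2 ^ (2 * m + 2) - 4 ^ (2 * m + 2))) /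
        (2 * (2 * j + 1) * ((2 * j + 2) * (2 * j))) := by
  obtain ⟨m, rfl⟩ : ∃ k, m = k + 1 := ⟨m - 1, by omega⟩
  obtain ⟨j, rfl⟩ : ∃ k, j = k + 1 := ⟨j - 1, by omega⟩
  have hsymm : (2 * (j + 1) - 1).choose (2 * (j + 1) - 2 * (m + 1)) =
      (2 * j + 1).choose (2 * m + 1) := by
    rw [show 2 * (j + 1) - 1 = 2 * j + 1 by omega,
      show 2 * (j + 1) - 2 * (m + 1) = 2 * j + 1 - (2 * m + 1) by omega,
      Nat.choose_symm (by omega)]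
  have hchoose : ((2 * (j + 1) + 2).choose (2 * (m + 1) + 2) : ℚ) *
      ((2 * m + 4) * (2 * m + 3) * (2 * m + 2)) =
      (2 * j + 4) * (2 * j + 3) * (2 * j + 2) * (2 * j + 1).choose (2 * m + 1) := by
    exact_mod_cast Nat.choose_add_three_mul (2 * j + 1) (2 * m + 1)
  rw [hsymm, eq_div_iff (by positivity), div_mul_eq_mul_div, div_mul_eq_mul_div,
    div_eq_iff (by positivity)]
  push_cast at hchoose ⊢
  have h2 : (2 : ℚ) ^ (2 * (m + 1) + 2) = 4 * 4 ^ (m + 1) := by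
    rw [show 2 * (m + 1) + 2 = 2 * (m + 1 + 1) by ring, pow_mul]; norm_num [pow_succ]; ring
  have h4 : (4 : ℚ) ^ (2 * (m + 1) + 2) = 4 * 4 ^ (2 * (m + 1) + 1) := by ring
  rw [h2, h4]
  linear_combination
    (-2 * bernoulli (2 * (m + 1) + 2) * (4 ^ (m + 1) - 4 ^ (2 * (m + 1) + 1))) * hchoose

theorem sum_bernoulli_mul_choose_eq (j : ℕ) (hj : 1 ≤ j) :
    1 / (2 * (2 * (j : ℚ) + 1)) =
      ∑ m ∈ Icc 1 j,
        bernoulli (2 * m + 2) * ((4 : ℚ) ^ m - 4 ^ (2 * m + 1)) /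
            (2 * m * ((m : ℚ) + 1) * (2 * m + 1)) *
          ((2 * j - 1).choose (2 * j - 2 * m) : ℚ) := by
  rw [sum_congr rfl fun m hm => bernoulli_term_eq_choose_div j m (mem_Icc.mp hm).1
    (mem_Icc.mp hm).2, ← sum_div, sum_Icc_choose_mul_bernoulli_mul_two_pow_sub_four_pow]
  have hj' : (1 : ℚ) ≤ j := mod_cast hj
  field_simp

theorem four_zpow_sub_sub_four_zpow (m : ℕ) (i : ℤ) :
    (4 : ℚ) ^ ((m : ℤ) - i) - 4 ^ (2 * (m : ℤ) - i + 1) =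
      4 ^ (-i) * (4 ^ m - 4 ^ (2 * m + 1)) := by
  have hexp₁ : (m : ℤ) - i = -i + m := by ring
  have hexp₂ : 2 * (m : ℤ) - i + 1 = -i + (2 * m + 1 : ℕ) := by push_cast; ring
  rw [hexp₁, hexp₂, zpow_add₀ four_ne_zero, zpow_add₀ four_ne_zero, zpow_natCast,
    zpow_natCast, mul_sub]

theorem two_zpow_neg_two_mul_sub_one (i : ℤ) : (2 : ℚ) ^ (-2 * i - 1) = 4 ^ (-i) / 2 := by
  rw [show -2 * i - 1 = 2 * (-i) + -1 by ring, zpow_add₀ two_ne_zero, zpow_mul]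
  norm_num
  ring

theorem bernoulli_binom_identity (j : ℕ) (hj : 1 ≤ j) :
    (∀ i : ℤ,
      (2 : ℚ) ^ (-2 * i - 1) / (2 * j + 1) -
        ∑ m ∈ Finset.Icc 1 j,
          bernoulli (2 * m + 2) * ((4 : ℚ) ^ ((m : ℤ) - i) - 4 ^ (2 * (m : ℤ) - i + 1)) /
              (2 * m * ((m : ℚ) + 1) * (2 * m + 1)) *
            ((2 * j - 1).choose (2 * j - 2 * m) : ℚ) = 0) ∧
    1 / (2 * (2 * (j : ℚ) + 1)) =
      ∑ m ∈ Finset.Icc 1 j,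
        bernoulli (2 * m + 2) * ((4 : ℚ) ^ m - 4 ^ (2 * m + 1)) /
            (2 * m * ((m : ℚ) + 1) * (2 * m + 1)) *
          ((2 * j - 1).choose (2 * j - 2 * m) : ℚ) := by
  have hsum := sum_bernoulli_mul_choose_eq j hj
  refine ⟨fun i => ?_, hsum⟩
  simp_rw [four_zpow_sub_sub_four_zpow, mul_left_comm (bernoulli _), mul_div_assoc,
    mul_assoc ((4 : ℚ) ^ (-i)), ← mul_sum, ← mul_div_assoc, ← hsum,
    two_zpow_neg_two_mul_sub_one]
  field_simp
  ring
end
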